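/- arXiv:1508.06626 — 3 statements merged into one kernel-verified Lean document; each statement's English description precedes it below -/
import Mathlib

section
/- For the function φ₀(x, λ) = ½(1 + 1/√ρ(x)) cos(λ μ⁺(x)) + ½(1 − 1/√ρ(x)) cos(λ μ⁻(x)), the following inversion holds: cos(λξ) = φ₀(ξ, λ) for ξ < a, and cos(λξ) = (2α/(1+α)) φ₀(ξ/α + a − a/α, λ) + ((1−α)/(1+α)) φ₀(2a − ξ, λ) for ξ > a. -/
theorem stmt3 (a α : ℝ) (ha : 0 < a) (haπ : a < Real.pi) (hα : 0 < α) (hα1 : α ≠ 1)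
    (ρ μp μm : ℝ → ℝ) (φ₀ : ℝ → ℝ → ℝ)
    (hρ : ∀ x, ρ x = if x ≤ a then 1 else α ^ 2)
    (hμp : ∀ x, μp x = x * Real.sqrt (ρ x) + a * (1 - Real.sqrt (ρ x)))
    (hμm : ∀ x, μm x = -x * Real.sqrt (ρ x) + a * (1 + Real.sqrt (ρ x)))
    (hφ : ∀ x lam, φ₀ x lam =
      (1 / 2) * (1 + 1 / Real.sqrt (ρ x)) * Real.cos (lam * μp x) +
      (1 / 2) * (1 - 1 / Real.sqrt (ρ x)) * Real.cos (lam * μm x)) :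
    ∀ lam ξ : ℝ,
      (ξ < a → Real.cos (lam * ξ) = φ₀ ξ lam) ∧
      (a < ξ → Real.cos (lam * ξ) =
        (2 * α / (1 + α)) * φ₀ (ξ / α + a - a / α) lam +
        ((1 - α) / (1 + α)) * φ₀ (2 * a - ξ) lam) := by
  intro lam ξ
  have hαne : α ≠ 0 := ne_of_gt hα
  have h1α : (1 : ℝ) + α ≠ 0 := by positivity
  constructor
  · intro hξ
    have h1 : ρ ξ = 1 := by rw [hρ]; simp [hξ.le]
    rw [hφ, hμp, hμm, h1]
    norm_num
  · intro hξ
    have hx₁ : ¬ (ξ / α + a - a / α ≤ a) := by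
      push_neg
      have h : a / α < ξ / α := by gcongr
      linarith
    have hρ1 : ρ (ξ / α + a - a / α) = α ^ 2 := by rw [hρ]; simp [hx₁]
    have hs : Real.sqrt (α ^ 2) = α := by
      rw [Real.sqrt_sq hα.le]
    have hx₂ : (2 * a - ξ) ≤ a := by linarith
    have hρ2 : ρ (2 * a - ξ) = 1 := by rw [hρ]; simp [hx₂]
    have hμp1 : μp (ξ / α + a - a / α) = ξ := by
      rw [hμp, hρ1, hs]; field_simp; ring
    have hμm1 : μm (ξ / α + a - a / α) = 2 * a - ξ := by
      rw [hμm, hρ1, hs]; field_simp; ring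
    have hμp2 : μp (2 * a - ξ) = 2 * a - ξ := by
      rw [hμp, hρ2]; simp
    have hμm2 : μm (2 * a - ξ) = ξ := by
      rw [hμm, hρ2]; simp; ring
    rw [hφ, hφ, hρ1, hρ2, hμp1, hμm1, hμp2, hμm2, hs, Real.sqrt_one]
    field_simp
    ring
end

section
/- The function φ₀(x, λ) = ½(1 + 1/√ρ(x)) cos(λ μ⁺(x)) + ½(1 − 1/√ρ(x)) cos(λ μ⁻(x)) satisfies −y'' = λ² ρ(x) y on each of the intervals (0, a) and (a, π), together with the matching conditions of continuity of y and y' at x = a: φ₀(a⁻, λ) = φ₀(a⁺, λ) and ∂ₓφ₀(a⁻, λ) = ∂ₓφ₀(a⁺, λ). -/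
/-! On each side of `a` the candidate is a combination of `cos (c x + b)` with `c² = λ² ρ`, so the
equation is the identity `(cos (c x + b))'' = -c² cos (c x + b)`. At `x = a` both phases of the
right-hand piece reduce to `λ a`; the amplitudes `½(1 ± 1/α)` add up to `1` and, weighted by the
frequencies `±λα`, to `λ`, which gives the matching of values and slopes. -/

section AffineCos

variable (c b : ℝ)

lemma hasDerivAt_cos_affine (x : ℝ) :
    HasDerivAt (fun x => Real.cos (c * x + b)) (-(c * Real.sin (c * x + b))) x := by
  have h := (((hasDerivAt_id' x).const_mul c).add_const b).cos
  convert h using 1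
  ring

lemma hasDerivAt_sin_affine (x : ℝ) :
    HasDerivAt (fun x => Real.sin (c * x + b)) (c * Real.cos (c * x + b)) x := by
  have h := (((hasDerivAt_id' x).const_mul c).add_const b).sin
  convert h using 1
  ring

lemma deriv_cos_affine :
    deriv (fun x => Real.cos (c * x + b)) = fun x => -(c * Real.sin (c * x + b)) :=
  funext fun x => (hasDerivAt_cos_affine c b x).deriv

lemma deriv_deriv_cos_affine (x : ℝ) :
    deriv (deriv fun x => Real.cos (c * x + b)) x = -(c ^ 2 * Real.cos (c * x + b)) := by
  have h : HasDerivAt (fun x => -(c * Real.sin (c * x + b)))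
      (-(c * (c * Real.cos (c * x + b)))) x :=
    ((hasDerivAt_sin_affine c b x).const_mul c).neg
  rw [deriv_cos_affine, h.deriv]
  ring

end AffineCos

section CosCombination

variable (k₁ k₂ c₁ c₂ b₁ b₂ : ℝ)

lemma deriv_cos_combination :
    deriv (fun x => k₁ * Real.cos (c₁ * x + b₁) + k₂ * Real.cos (c₂ * x + b₂)) =
      fun x => -(k₁ * c₁ * Real.sin (c₁ * x + b₁) + k₂ * c₂ * Real.sin (c₂ * x + b₂)) := by
  funext x
  have h : HasDerivAt (fun x => k₁ * Real.cos (c₁ * x + b₁) + k₂ * Real.cos (c₂ * x + b₂))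
      (k₁ * -(c₁ * Real.sin (c₁ * x + b₁)) + k₂ * -(c₂ * Real.sin (c₂ * x + b₂))) x :=
    ((hasDerivAt_cos_affine c₁ b₁ x).const_mul k₁).add
      ((hasDerivAt_cos_affine c₂ b₂ x).const_mul k₂)
  rw [h.deriv]
  ring

lemma deriv_deriv_cos_combination (x : ℝ) :
    deriv (deriv fun x => k₁ * Real.cos (c₁ * x + b₁) + k₂ * Real.cos (c₂ * x + b₂)) x =
      -(k₁ * c₁ ^ 2 * Real.cos (c₁ * x + b₁) + k₂ * c₂ ^ 2 * Real.cos (c₂ * x + b₂)) := by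
  have h : HasDerivAt
      (fun x => -(k₁ * c₁ * Real.sin (c₁ * x + b₁) + k₂ * c₂ * Real.sin (c₂ * x + b₂)))
      (-(k₁ * c₁ * (c₁ * Real.cos (c₁ * x + b₁)) + k₂ * c₂ * (c₂ * Real.cos (c₂ * x + b₂)))) x :=
    (((hasDerivAt_sin_affine c₁ b₁ x).const_mul (k₁ * c₁)).add
      ((hasDerivAt_sin_affine c₂ b₂ x).const_mul (k₂ * c₂))).neg
  rw [deriv_cos_combination, h.deriv]
  ring

end CosCombination

theorem stmt4_general (a α lam : ℝ) (hα : 0 < α)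
    (ρ : ℝ → ℝ) (hρ : ∀ x, ρ x = if x ≤ a then 1 else α ^ 2)
    (g₁ g₂ : ℝ → ℝ)
    (hg₁ : ∀ x, g₁ x = Real.cos (lam * x))
    (hg₂ : ∀ x, g₂ x =
      (1 / 2) * (1 + 1 / α) * Real.cos (lam * (α * x + a * (1 - α))) +
      (1 / 2) * (1 - 1 / α) * Real.cos (lam * (-α * x + a * (1 + α)))) :
    (∀ x ∈ Set.Ioo (0 : ℝ) a, deriv (deriv g₁) x = -(lam ^ 2 * ρ x * g₁ x)) ∧
    (∀ x ∈ Set.Ioo a Real.pi, deriv (deriv g₂) x = -(lam ^ 2 * ρ x * g₂ x)) ∧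
    g₁ a = g₂ a ∧ deriv g₁ a = deriv g₂ a := by
  have hg₁' : g₁ = fun x => Real.cos (lam * x + 0) := funext fun x => by simp [hg₁]
  have hg₂' : g₂ = fun x =>
      (1 / 2) * (1 + 1 / α) * Real.cos (lam * α * x + lam * a * (1 - α)) +
      (1 / 2) * (1 - 1 / α) * Real.cos (-(lam * α) * x + lam * a * (1 + α)) :=
    funext fun x => by rw [hg₂]; ring_nf
  have phase_left : lam * α * a + lam * a * (1 - α) = lam * a := by ring
  have phase_right : -(lam * α) * a + lam * a * (1 + α) = lam * a := by ring
  refine ⟨fun x hx => ?_, fun x hx => ?_, ?_, ?_⟩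
  · rw [hg₁', deriv_deriv_cos_affine, hρ, if_pos hx.2.le]
    ring
  · rw [hg₂', deriv_deriv_cos_combination, hρ, if_neg (not_le.mpr hx.1)]
    ring
  · rw [hg₁', hg₂']
    simp only [phase_left, phase_right, add_zero]
    ring
  · rw [hg₁', hg₂', deriv_cos_affine, deriv_cos_combination]
    simp only [phase_left, phase_right, add_zero]
    field_simp
    ring

/-- φ₀ solves −y'' = λ²ρy on (0,a) and (a,π), with continuity of y and y' at a.
On (0,a) φ₀(·,λ) coincides with g₁ x = cos (λ x); on (a,π) it coincides with
g₂ x = ½(1+1/α)cos(λ(αx+a(1−α))) + ½(1−1/α)cos(λ(−αx+a(1+α))). -/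
theorem stmt4 (a α lam : ℝ) (ha : 0 < a) (haπ : a < Real.pi) (hα : 0 < α)
    (ρ : ℝ → ℝ) (hρ : ∀ x, ρ x = if x ≤ a then 1 else α ^ 2)
    (g₁ g₂ : ℝ → ℝ)
    (hg₁ : ∀ x, g₁ x = Real.cos (lam * x))
    (hg₂ : ∀ x, g₂ x =
      (1 / 2) * (1 + 1 / α) * Real.cos (lam * (α * x + a * (1 - α))) +
      (1 / 2) * (1 - 1 / α) * Real.cos (lam * (-α * x + a * (1 + α)))) :
    (∀ x ∈ Set.Ioo (0 : ℝ) a, deriv (deriv g₁) x = -(lam ^ 2 * ρ x * g₁ x)) ∧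
    (∀ x ∈ Set.Ioo a Real.pi, deriv (deriv g₂) x = -(lam ^ 2 * ρ x * g₂ x)) ∧
    g₁ a = g₂ a ∧ deriv g₁ a = deriv g₂ a :=
  stmt4_general a α lam hα ρ hρ g₁ g₂ hg₁ hg₂
end

section
/- With L⁻¹ given by (L⁻¹φ)(t) = φ(t) − ((1−α)/2) φ((−t + αa + a)/α) for t < a and ((1+α)/2) φ((t + αa − a)/α) for t > a (with φ extended by zero beyond π), there exists a constant C > 0 depending only on α such that ∫₀^π |(L⁻¹φ)(t)|² dt ≤ C ∫₀^π |φ(t)|² dt for all φ ∈ L²(0, π). In particular one can take C = 2 + α(1−α)²/2 + α(1+α)²/4. -/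
/-!
Writing `ψ₁ t = (-t + αa + a)/α` and `ψ₂ t = (t + αa - a)/α`, the inequality
`(x - c y)² ≤ 2x² + 2c²y²` bounds `|L⁻¹φ(t)|²` pointwise by
`2 φ(t)² + 2 ((1-α)/2)² φ(ψ₁ t)² + ((1+α)/2)² φ(ψ₂ t)²`. Both `ψᵢ` are affine of slope `∓1/α`,
so `∫ φ(ψᵢ t)² dt = α ∫ φ²` over the whole line, and integrating gives the constant
`2 + 2α((1-α)/2)² + α((1+α)/2)²`.

Since `φ` is only square integrable on `(0, π)` and arbitrary on `(-∞, 0]`, it is first replaced by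
a representative `w ∈ L²(ℝ)` vanishing off `(0, π)`. For `t ∈ (0, π)` the operator only reads `φ`
on `(0, ∞)`, where `φ = w` a.e. (`φ` vanishes beyond `π` by assumption), and the affine maps are
quasi-measure-preserving, so `L⁻¹φ = L⁻¹w` a.e. on `(0, π)`.
-/

open MeasureTheory Set

section Affine

variable {ψ : ℝ → ℝ} {c d : ℝ}

lemma quasiMeasurePreserving_of_affine (hψ : ψ = fun t => c * t + d) (hc : c ≠ 0) :
    Measure.QuasiMeasurePreserving ψ := by
  subst hψ
  exact (measurePreserving_add_right volume d).quasiMeasurePreserving.comp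
    (Measure.quasiMeasurePreserving_smul volume hc)

lemma integral_comp_of_affine (hψ : ψ = fun t => c * t + d) (g : ℝ → ℝ) :
    ∫ t, g (ψ t) = |c⁻¹| * ∫ t, g t := by
  subst hψ
  rw [Measure.integral_comp_mul_left (fun x => g (x + d)) c, integral_add_right_eq_self,
    smul_eq_mul]

lemma MeasureTheory.Integrable.comp_of_affine {g : ℝ → ℝ} (hg : Integrable g)
    (hψ : ψ = fun t => c * t + d) (hc : c ≠ 0) : Integrable (fun t => g (ψ t)) := by
  subst hψ
  exact (hg.comp_add_right d).comp_mul_left' hc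

end Affine

lemma exists_memLp_ae_eq_of_eq_zero_of_gt {φ : ℝ → ℝ} {b : ℝ} (hφ₀ : ∀ t, b < t → φ t = 0)
    (hφ : MemLp φ 2 (volume.restrict (Ioo 0 b))) :
    ∃ w : ℝ → ℝ, MemLp w 2 ∧ (∀ t, t ∉ Ioo 0 b → w t = 0) ∧ ∀ᵐ t, 0 < t → φ t = w t := by
  refine ⟨(Ioo 0 b).indicator (hφ.1.mk φ), ?_, fun t ht => indicator_of_notMem ht _, ?_⟩
  · exact (memLp_indicator_iff_restrict measurableSet_Ioo).2 (hφ.ae_eq hφ.1.ae_eq_mk)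
  · have hmk := (ae_restrict_iff' measurableSet_Ioo).1 hφ.1.ae_eq_mk
    filter_upwards [hmk, volume.ae_ne b] with t hmk hb ht
    rcases hb.lt_or_gt with htb | htb
    · have htS : t ∈ Ioo 0 b := ⟨ht, htb⟩
      rw [indicator_of_mem htS, hmk htS]
    · rw [hφ₀ t htb, indicator_of_notMem fun h : t ∈ Ioo 0 b => h.2.not_gt htb]

noncomputable def reflectDilateAt (a α t : ℝ) : ℝ := (-t + α * a + a) / α

noncomputable def dilateAt (a α t : ℝ) : ℝ := (t + α * a - a) / α

noncomputable def invOp (a α : ℝ) (φ : ℝ → ℝ) (t : ℝ) : ℝ :=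
  if t < a then φ t - ((1 - α) / 2) * φ (reflectDilateAt a α t)
  else ((1 + α) / 2) * φ (dilateAt a α t)

lemma reflectDilateAt_eq_affine (a α : ℝ) :
    reflectDilateAt a α = fun t => -α⁻¹ * t + (α * a + a) / α := by
  ext t; simp only [reflectDilateAt]; ring

lemma dilateAt_eq_affine (a α : ℝ) : dilateAt a α = fun t => α⁻¹ * t + (α * a - a) / α := by
  ext t; simp only [dilateAt]; ring

section InvOp

variable {a α : ℝ}

lemma reflectDilateAt_pos (ha : 0 < a) (hα : 0 < α) {t : ℝ} (ht : t < a) :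
    0 < reflectDilateAt a α t :=
  div_pos (by nlinarith) hα

lemma dilateAt_pos (ha : 0 < a) (hα : 0 < α) {t : ℝ} (ht : a ≤ t) : 0 < dilateAt a α t :=
  div_pos (by nlinarith) hα

lemma invOp_ae_congr (ha : 0 < a) (hα : 0 < α) {φ w : ℝ → ℝ} (h : ∀ᵐ t, 0 < t → φ t = w t) :
    ∀ᵐ t, 0 < t → invOp a α φ t = invOp a α w t := by
  have hα₀ : α⁻¹ ≠ 0 := inv_ne_zero hα.ne'
  filter_upwards [h,
    (quasiMeasurePreserving_of_affine (reflectDilateAt_eq_affine a α) (neg_ne_zero.2 hα₀)).ae h,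
    (quasiMeasurePreserving_of_affine (dilateAt_eq_affine a α) hα₀).ae h] with t h₀ h₁ h₂ ht
  unfold invOp
  split_ifs with hta
  · rw [h₀ ht, h₁ (reflectDilateAt_pos ha hα hta)]
  · rw [h₂ (dilateAt_pos ha hα (not_lt.1 hta))]

lemma sq_invOp_le (w : ℝ → ℝ) (t : ℝ) :
    invOp a α w t ^ 2 ≤ 2 * w t ^ 2 + 2 * ((1 - α) / 2) ^ 2 * w (reflectDilateAt a α t) ^ 2
      + ((1 + α) / 2) ^ 2 * w (dilateAt a α t) ^ 2 := by
  unfold invOp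
  split_ifs
  · nlinarith [sq_nonneg (w t + (1 - α) / 2 * w (reflectDilateAt a α t)),
      sq_nonneg ((1 + α) / 2 * w (dilateAt a α t))]
  · nlinarith [sq_nonneg (w t), sq_nonneg ((1 - α) / 2 * w (reflectDilateAt a α t))]

lemma integral_sq_invOp_le (hα : 0 < α) {w : ℝ → ℝ} (hw : MemLp w 2) (s : Set ℝ) :
    ∫ t in s, invOp a α w t ^ 2 ≤
      (2 + α * (1 - α) ^ 2 / 2 + α * (1 + α) ^ 2 / 4) * ∫ t, w t ^ 2 := by
  have hα₀ : α⁻¹ ≠ 0 := inv_ne_zero hα.ne'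
  have hg : Integrable fun t => w t ^ 2 := hw.integrable_sq
  have hg₁ := hg.comp_of_affine (reflectDilateAt_eq_affine a α) (neg_ne_zero.2 hα₀)
  have hg₂ := hg.comp_of_affine (dilateAt_eq_affine a α) hα₀
  have hG : Integrable fun t => 2 * w t ^ 2 + 2 * ((1 - α) / 2) ^ 2 *
      w (reflectDilateAt a α t) ^ 2 + ((1 + α) / 2) ^ 2 * w (dilateAt a α t) ^ 2 :=
    ((hg.const_mul 2).add (hg₁.const_mul _)).add (hg₂.const_mul _)
  calc ∫ t in s, invOp a α w t ^ 2
      ≤ ∫ t in s, (2 * w t ^ 2 + 2 * ((1 - α) / 2) ^ 2 * w (reflectDilateAt a α t) ^ 2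
          + ((1 + α) / 2) ^ 2 * w (dilateAt a α t) ^ 2) :=
        integral_mono_of_nonneg (ae_of_all _ fun t => sq_nonneg _) hG.integrableOn
          (ae_of_all _ (sq_invOp_le w))
    _ ≤ ∫ t, (2 * w t ^ 2 + 2 * ((1 - α) / 2) ^ 2 * w (reflectDilateAt a α t) ^ 2
          + ((1 + α) / 2) ^ 2 * w (dilateAt a α t) ^ 2) :=
        setIntegral_le_integral hG (ae_of_all _ fun t => by positivity)
    _ = (2 + α * (1 - α) ^ 2 / 2 + α * (1 + α) ^ 2 / 4) * ∫ t, w t ^ 2 := by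
      rw [integral_add, integral_add, integral_const_mul, integral_const_mul,
        integral_const_mul,
        integral_comp_of_affine (reflectDilateAt_eq_affine a α) fun x => w x ^ 2,
        integral_comp_of_affine (dilateAt_eq_affine a α) fun x => w x ^ 2,
        inv_neg, abs_neg, inv_inv, abs_of_pos hα]
      · ring
      exacts [hg.const_mul _, hg₁.const_mul _, (hg.const_mul _).add (hg₁.const_mul _),
        hg₂.const_mul _]

end InvOp

theorem stmt8_general (a α : ℝ) (ha : 0 < a) (hα : 0 < α)
    (Linv : (ℝ → ℝ) → (ℝ → ℝ))
    (hLinv : ∀ φ t, Linv φ t =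
      if t < a then φ t - ((1 - α) / 2) * φ ((-t + α * a + a) / α)
      else ((1 + α) / 2) * φ ((t + α * a - a) / α)) :
    ∃ C : ℝ, 0 < C ∧ C = 2 + α * (1 - α) ^ 2 / 2 + α * (1 + α) ^ 2 / 4 ∧
      ∀ φ : ℝ → ℝ, (∀ t, Real.pi < t → φ t = 0) →
        MemLp φ 2 (volume.restrict (Set.Ioo 0 Real.pi)) →
        ∫ t in Set.Ioo (0 : ℝ) Real.pi, |Linv φ t| ^ 2 ≤
          C * ∫ t in Set.Ioo (0 : ℝ) Real.pi, |φ t| ^ 2 := by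
  obtain rfl : Linv = invOp a α := funext₂ hLinv
  refine ⟨_, by positivity, rfl, fun φ hφ₀ hφ => ?_⟩
  obtain ⟨w, hw, hw₀, hφw⟩ := exists_memLp_ae_eq_of_eq_zero_of_gt hφ₀ hφ
  have on_Ioo {P : ℝ → Prop} (h : ∀ᵐ t, 0 < t → P t) :
      ∀ᵐ t ∂volume.restrict (Ioo 0 Real.pi), P t :=
    (ae_restrict_iff' measurableSet_Ioo).2 (h.mono fun t ht htS => ht htS.1)
  calc ∫ t in Ioo 0 Real.pi, |invOp a α φ t| ^ 2
      = ∫ t in Ioo 0 Real.pi, invOp a α w t ^ 2 := by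
        refine integral_congr_ae ((on_Ioo (invOp_ae_congr ha hα hφw)).mono fun t ht => ?_)
        simp only [sq_abs, ht]
    _ ≤ (2 + α * (1 - α) ^ 2 / 2 + α * (1 + α) ^ 2 / 4) * ∫ t, w t ^ 2 :=
        integral_sq_invOp_le hα hw _
    _ = (2 + α * (1 - α) ^ 2 / 2 + α * (1 + α) ^ 2 / 4) * ∫ t in Ioo 0 Real.pi, |φ t| ^ 2 := by
      rw [← setIntegral_eq_integral_of_forall_compl_eq_zero fun t ht => by simp [hw₀ t ht]]
      refine congrArg _ (integral_congr_ae ((on_Ioo hφw).mono fun t ht => ?_))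
      simp only [sq_abs, ht]

/-- Explicit L² bound for L⁻¹: ∫₀^π |(L⁻¹φ)(t)|² dt ≤ C ∫₀^π |φ(t)|² dt with
C = 2 + α(1−α)²/2 + α(1+α)²/4. -/
theorem stmt8 (a α : ℝ) (ha : 0 < a) (haπ : a < Real.pi) (hα : 0 < α)
    (hcond : a * (1 + α) > Real.pi * α)
    (Linv : (ℝ → ℝ) → (ℝ → ℝ))
    (hLinv : ∀ φ t, Linv φ t =
      if t < a then φ t - ((1 - α) / 2) * φ ((-t + α * a + a) / α)
      else ((1 + α) / 2) * φ ((t + α * a - a) / α)) :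
    ∃ C : ℝ, 0 < C ∧ C = 2 + α * (1 - α) ^ 2 / 2 + α * (1 + α) ^ 2 / 4 ∧
      ∀ φ : ℝ → ℝ, (∀ t, Real.pi < t → φ t = 0) →
        MemLp φ 2 (volume.restrict (Set.Ioo 0 Real.pi)) →
        ∫ t in Set.Ioo (0 : ℝ) Real.pi, |Linv φ t| ^ 2 ≤
          C * ∫ t in Set.Ioo (0 : ℝ) Real.pi, |φ t| ^ 2 :=
  stmt8_general a α ha hα Linv hLinv
end
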